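/- Let M₁, M₂ ∈ C₄⁻. Then M₁ ∩ M₂ ≠ ∅, and: (1) if |M₁ ∩ M₂| = 1 then M₁ △ M₂ ∈ C₆⁺; (2) if |M₁ ∩ M₂| = 2 then M₁ △ M₂ ∈ C₄⁻; (3) if |M₁ ∩ M₂| > 2 then M₁ = M₂. -/
import Mathlib


open scoped Classical

/-- A 2-characteristic: a pair `m = (m', m'')` with `m', m'' ∈ (ZMod 2)²`. -/
abbrev Char2 : Type := (ZMod 2 × ZMod 2) × (ZMod 2 × ZMod 2)

/-- `m` is even if `m'₁·m''₁ + m'₂·m''₂ = 0` in `ZMod 2`. -/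
def IsEvenChar (m : Char2) : Prop := m.1.1 * m.2.1 + m.1.2 * m.2.2 = 0

/-- `m` is odd if it is not even. -/
def IsOddChar (m : Char2) : Prop := ¬ IsEvenChar m

/-- The finset of all (10) even 2-characteristics. -/
noncomputable def EvenChars : Finset Char2 := Finset.univ.filter IsEvenChar

/-- `C₃⁻`: 3-element sets of even characteristics whose sum is odd. -/
def C3minus (M : Finset Char2) : Prop :=
  M ⊆ EvenChars ∧ M.card = 3 ∧ IsOddChar (∑ m ∈ M, m)

/-- `C₃⁺`: 3-element sets of even characteristics whose sum is even. -/
def C3plus (M : Finset Char2) : Prop :=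
  M ⊆ EvenChars ∧ M.card = 3 ∧ IsEvenChar (∑ m ∈ M, m)

/-- `C₄⁻`: 4-element sets of even characteristics all of whose 3-element subsets lie in `C₃⁻`. -/
def C4minus (M : Finset Char2) : Prop :=
  M ⊆ EvenChars ∧ M.card = 4 ∧ ∀ T ⊆ M, T.card = 3 → C3minus T

/-- `C₄⁺`: 4-element sets of even characteristics all of whose 3-element subsets lie in `C₃⁺`. -/
def C4plus (M : Finset Char2) : Prop :=
  M ⊆ EvenChars ∧ M.card = 4 ∧ ∀ T ⊆ M, T.card = 3 → C3plus T

/-- `C₅⁻`: 5-element sets of even characteristics containing exactly one element of `C₄⁻`. -/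
def C5minus (M : Finset Char2) : Prop :=
  M ⊆ EvenChars ∧ M.card = 5 ∧ ∃! T, T ⊆ M ∧ C4minus T

/-- `C₅⁺`: 5-element sets of even characteristics containing exactly one element of `C₄⁺`. -/
def C5plus (M : Finset Char2) : Prop :=
  M ⊆ EvenChars ∧ M.card = 5 ∧ ∃! T, T ⊆ M ∧ C4plus T

/-- `C₆⁻`: 6-element sets of even characteristics whose complement lies in `C₄⁺`. -/
def C6minus (M : Finset Char2) : Prop :=
  M ⊆ EvenChars ∧ M.card = 6 ∧ C4plus (EvenChars \ M)

/-- `C₆⁺`: 6-element sets of even characteristics whose complement lies in `C₄⁻`. -/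
def C6plus (M : Finset Char2) : Prop :=
  M ⊆ EvenChars ∧ M.card = 6 ∧ C4minus (EvenChars \ M)



section Aux

instance instDecIsEvenChar : DecidablePred IsEvenChar :=
  fun _ => inferInstanceAs (Decidable (_ = _))

/-- Computable version of `EvenChars`. -/
def EvenChars' : Finset Char2 := Finset.univ.filter IsEvenChar

lemma evenChars_eq : EvenChars = EvenChars' := by
  ext x; simp [EvenChars, EvenChars']

lemma char2_add_self (m : Char2) : m + m = 0 := by
  obtain ⟨⟨a, b⟩, c, d⟩ := m
  simp [Prod.ext_iff]
  exact ⟨⟨CharTwo.add_self_eq_zero a, CharTwo.add_self_eq_zero b⟩,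
    CharTwo.add_self_eq_zero c, CharTwo.add_self_eq_zero d⟩

/-- Computable version of `C4minus`. -/
def C4m' (M : Finset Char2) : Prop :=
  M ⊆ EvenChars' ∧ M.card = 4 ∧ ∀ m ∈ M, ¬ IsEvenChar ((∑ x ∈ M, x) + m)

instance : DecidablePred C4m' := fun _ => instDecidableAnd

/-- Computable version of `C6plus`. -/
def C6p' (M : Finset Char2) : Prop :=
  M ⊆ EvenChars' ∧ M.card = 6 ∧ C4m' (EvenChars' \ M)

instance : DecidablePred C6p' := fun _ => instDecidableAnd

lemma sum_erase_eq (M : Finset Char2) {m : Char2} (hm : m ∈ M) :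
    (∑ x ∈ M.erase m, x) = (∑ x ∈ M, x) + m := by
  have h : (∑ x ∈ M.erase m, x) + m = ∑ x ∈ M, x :=
    Finset.sum_erase_add M id hm
  calc (∑ x ∈ M.erase m, x)
      = (∑ x ∈ M.erase m, x) + (m + m) := by rw [char2_add_self, add_zero]
    _ = ((∑ x ∈ M.erase m, x) + m) + m := by rw [add_assoc]
    _ = (∑ x ∈ M, x) + m := by rw [h]

lemma C4minus_iff (M : Finset Char2) : C4minus M ↔ C4m' M := by
  unfold C4minus C4m' C3minus IsOddChar
  rw [evenChars_eq]
  constructor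
  · rintro ⟨hs, hc, h⟩
    refine ⟨hs, hc, fun m hm => ?_⟩
    have hsub : M.erase m ⊆ M := Finset.erase_subset m M
    have hcard : (M.erase m).card = 3 := by
      rw [Finset.card_erase_of_mem hm, hc]
    have := (h (M.erase m) hsub hcard).2.2
    rwa [sum_erase_eq M hm] at this
  · rintro ⟨hs, hc, h⟩
    refine ⟨hs, hc, fun T hTM hTc => ⟨hTM.trans hs, hTc, ?_⟩⟩
    -- find the missing element
    have hcard : (M \ T).card = 1 := by
      rw [Finset.card_sdiff_of_subset hTM, hc, hTc]
    obtain ⟨m, hmeq⟩ := Finset.card_eq_one.mp hcard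
    have hmM : m ∈ M := (Finset.mem_sdiff.mp (hmeq ▸ Finset.mem_singleton_self m)).1
    have hmT : m ∉ T := (Finset.mem_sdiff.mp (hmeq ▸ Finset.mem_singleton_self m)).2
    have hTe : T = M.erase m := by
      apply Finset.eq_of_subset_of_card_le
      · intro x hx
        exact Finset.mem_erase.mpr ⟨fun hxm => hmT (hxm ▸ hx), hTM hx⟩
      · rw [Finset.card_erase_of_mem hmM, hc, hTc]
    rw [hTe, sum_erase_eq M hmM]
    exact h m hmM

lemma C6plus_iff (M : Finset Char2) : C6plus M ↔ C6p' M := by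
  unfold C6plus C6p'
  rw [evenChars_eq, C4minus_iff]

/-- The finset of all `C₄⁻` sets. -/
def LC4 : Finset (Finset Char2) := (EvenChars'.powersetCard 4).filter C4m'

lemma mem_LC4 (M : Finset Char2) : C4minus M ↔ M ∈ LC4 := by
  rw [C4minus_iff]
  unfold LC4
  rw [Finset.mem_filter, Finset.mem_powersetCard]
  exact ⟨fun h => ⟨⟨h.1, h.2.1⟩, h⟩, fun h => h.2⟩

/-- Indexed family of all 15 `C₄⁻` sets. -/
def fC4 : Fin 15 → Finset Char2 :=
  ![{((1,0),(0,0)), ((1,0),(0,1)), ((1,1),(0,0)), ((1,1),(1,1))},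
    {((0,1),(0,0)), ((0,1),(1,0)), ((1,1),(0,0)), ((1,1),(1,1))},
    {((0,1),(0,0)), ((0,1),(1,0)), ((1,0),(0,0)), ((1,0),(0,1))},
    {((0,0),(1,0)), ((0,0),(1,1)), ((0,1),(1,0)), ((1,1),(1,1))},
    {((0,0),(1,0)), ((0,0),(1,1)), ((0,1),(0,0)), ((1,1),(0,0))},
    {((0,0),(0,1)), ((0,0),(1,1)), ((1,0),(0,1)), ((1,1),(1,1))},
    {((0,0),(0,1)), ((0,0),(1,1)), ((1,0),(0,0)), ((1,1),(0,0))},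
    {((0,0),(0,1)), ((0,0),(1,0)), ((0,1),(1,0)), ((1,0),(0,1))},
    {((0,0),(0,1)), ((0,0),(1,0)), ((0,1),(0,0)), ((1,0),(0,0))},
    {((0,0),(0,0)), ((0,0),(1,1)), ((0,1),(1,0)), ((1,0),(0,0))},
    {((0,0),(0,0)), ((0,0),(1,1)), ((0,1),(0,0)), ((1,0),(0,1))},
    {((0,0),(0,0)), ((0,0),(1,0)), ((1,0),(0,1)), ((1,1),(0,0))},
    {((0,0),(0,0)), ((0,0),(1,0)), ((1,0),(0,0)), ((1,1),(1,1))},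
    {((0,0),(0,0)), ((0,0),(0,1)), ((0,1),(1,0)), ((1,1),(0,0))},
    {((0,0),(0,0)), ((0,0),(0,1)), ((0,1),(0,0)), ((1,1),(1,1))}]

set_option maxRecDepth 100000 in
set_option maxHeartbeats 1000000 in
lemma LC4_eq : LC4 = Finset.univ.image fC4 := by decide

set_option maxRecDepth 100000 in
set_option maxHeartbeats 1000000 in
lemma key : ∀ i j : Fin 15,
    (fC4 i) ∩ (fC4 j) ≠ ∅ ∧
    (((fC4 i) ∩ (fC4 j)).card = 1 → C6p' (((fC4 i) ∪ (fC4 j)) \ ((fC4 i) ∩ (fC4 j)))) ∧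
    (((fC4 i) ∩ (fC4 j)).card = 2 → C4m' (((fC4 i) ∪ (fC4 j)) \ ((fC4 i) ∩ (fC4 j)))) ∧
    (2 < ((fC4 i) ∩ (fC4 j)).card → fC4 i = fC4 j) := by decide

end Aux

theorem C4minus_symmDiff_cases (M₁ M₂ : Finset Char2)
    (h₁ : C4minus M₁) (h₂ : C4minus M₂) :
    M₁ ∩ M₂ ≠ ∅ ∧
    ((M₁ ∩ M₂).card = 1 → C6plus ((M₁ ∪ M₂) \ (M₁ ∩ M₂))) ∧
    ((M₁ ∩ M₂).card = 2 → C4minus ((M₁ ∪ M₂) \ (M₁ ∩ M₂))) ∧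
    (2 < (M₁ ∩ M₂).card → M₁ = M₂) := by
  rw [mem_LC4, LC4_eq] at h₁ h₂
  obtain ⟨i, -, hi⟩ := Finset.mem_image.mp h₁
  obtain ⟨j, -, hj⟩ := Finset.mem_image.mp h₂
  subst hi hj
  obtain ⟨ha, hb, hc, hd⟩ := key i j
  exact ⟨ha, fun h => (C6plus_iff _).mpr (hb h), fun h => (C4minus_iff _).mpr (hc h), hd⟩
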